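/- The ℚ-algebra homomorphism ℚ[ρ,b₁,b₂,d₂] → R_Fl sending ρ ↦ ξ, b₁ ↦ −3h, b₂ ↦ 3h², d₂ ↦ 3h² maps every generator of I_Q to zero; hence it descends to a ℚ-algebra homomorphism i* : R_Q → R_Fl, and this induced homomorphism is surjective. -/
import Mathlib


open MvPolynomial

noncomputable section

/-- Variables of ℚ[ρ,b₁,b₂,d₂]: `X 0 = ρ`, `X 1 = b₁`, `X 2 = b₂`, `X 3 = d₂`. -/
abbrev PQ := MvPolynomial (Fin 4) ℚ

/-- The generators of the ideal I_Q presenting the Chow ring of Q = ℙ(U). -/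
def gensQ : List PQ :=
  [ X 1 ^ 2 * X 3 - 3 * X 3 ^ 2,
    X 1 ^ 2 * X 2 - X 2 * X 3 - 3 * X 3 ^ 2,
    X 1 ^ 4 + 3 * X 2 ^ 2 - 9 * X 2 * X 3 - 3 * X 3 ^ 2,
    2 * X 1 * X 2 * X 3 - 3 * X 1 * X 3 ^ 2,
    3 * X 1 * X 2 ^ 2 - 7 * X 1 * X 3 ^ 2,
    X 0 ^ 12 + 3 * X 0 ^ 11 * X 1 + 3 * X 0 ^ 10 * (X 1 ^ 2 + 2 * X 2 - X 3)
      + X 0 ^ 9 * (-X 1 ^ 3 + 12 * X 1 * X 2 + 2 * X 1 * X 3)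
      + 3 * X 0 ^ 8 * (9 * X 2 ^ 2 - 16 * X 2 * X 3 + 17 * X 3 ^ 2)
      + 28 * X 0 ^ 7 * X 1 * X 3 ^ 2 + 56 * X 0 ^ 6 * X 3 ^ 3 ]

/-- The ideal I_Q. -/
def IQ : Ideal PQ := Ideal.span {g | g ∈ gensQ}

/-- The Chow ring R_Q of Q. -/
abbrev RQ := PQ ⧸ IQ

/-- Variables of ℚ[h,ξ]: `X 0 = h`, `X 1 = ξ`.  The ideal ⟨h³, h²+hξ+ξ²⟩. -/
def JFl : Ideal (MvPolynomial (Fin 2) ℚ) :=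
  Ideal.span {X 0 ^ 3, X 0 ^ 2 + X 0 * X 1 + X 1 ^ 2}

/-- The Chow ring of the full flag variety Fl(V). -/
abbrev RFl := MvPolynomial (Fin 2) ℚ ⧸ JFl

/-- The homomorphism ℚ[ρ,b₁,b₂,d₂] → R_Fl given by ρ ↦ ξ, b₁ ↦ −3h, b₂ ↦ 3h², d₂ ↦ 3h². -/
def φ : PQ →ₐ[ℚ] RFl :=
  aeval fun i => Ideal.Quotient.mk JFl
    (![X 1, -3 * X 0, 3 * X 0 ^ 2, 3 * X 0 ^ 2] i)

/-- The substitution on the polynomial level. -/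
def fQ : Fin 4 → MvPolynomial (Fin 2) ℚ :=
  ![X 1, -3 * X 0, 3 * X 0 ^ 2, 3 * X 0 ^ 2]

lemma φ_eq : φ = (Ideal.Quotient.mkₐ ℚ JFl).comp (aeval fQ) := by
  rw [MvPolynomial.comp_aeval]; rfl

lemma φ_apply (p : PQ) : φ p = Ideal.Quotient.mk JFl (aeval fQ p) := by
  rw [φ_eq]; rfl

lemma gens_vanish : ∀ g ∈ gensQ, φ g = 0 := by
  intro g hg
  rw [φ_apply, Ideal.Quotient.eq_zero_iff_mem, JFl]
  simp only [gensQ, List.mem_cons, List.not_mem_nil, or_false] at hg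
  rcases hg with rfl | rfl | rfl | rfl | rfl | rfl <;>
    rw [Ideal.mem_span_pair]
  · exact ⟨0, 0, by simp only [fQ, map_sub, map_mul, map_add, map_pow, map_ofNat, aeval_X,
      Matrix.cons_val_one, Matrix.cons_val_zero, Matrix.head_cons, Matrix.cons_val_two,
      Matrix.tail_cons, Matrix.cons_val_three]; ring⟩
  · exact ⟨-9 * X 0, 0, by simp only [fQ, map_sub, map_mul, map_add, map_pow, map_ofNat, aeval_X,
      Matrix.cons_val_one, Matrix.cons_val_zero, Matrix.head_cons, Matrix.cons_val_two,
      Matrix.tail_cons, Matrix.cons_val_three]; ring⟩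
  · exact ⟨0, 0, by simp only [fQ, map_sub, map_mul, map_add, map_pow, map_ofNat, aeval_X,
      Matrix.cons_val_one, Matrix.cons_val_zero, Matrix.head_cons, Matrix.cons_val_two,
      Matrix.tail_cons, Matrix.cons_val_three]; ring⟩
  · exact ⟨27 * X 0 ^ 2, 0, by simp only [fQ, map_sub, map_mul, map_add, map_pow, map_ofNat,
      aeval_X, Matrix.cons_val_one, Matrix.cons_val_zero, Matrix.head_cons, Matrix.cons_val_two,
      Matrix.tail_cons, Matrix.cons_val_three]; ring⟩
  · exact ⟨108 * X 0 ^ 2, 0, by simp only [fQ, map_sub, map_mul, map_add, map_pow, map_ofNat,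
      aeval_X, Matrix.cons_val_one, Matrix.cons_val_zero, Matrix.head_cons, Matrix.cons_val_two,
      Matrix.tail_cons, Matrix.cons_val_three]; ring⟩
  · exact ⟨-981 * X 0 ^ 8 * X 1 + 1153 * X 0 ^ 9,
      X 1 ^ 10 - 10 * X 0 * X 1 ^ 9 + 45 * X 0 ^ 2 * X 1 ^ 8 - 134 * X 0 ^ 3 * X 1 ^ 7
        + 359 * X 0 ^ 4 * X 1 ^ 6 - 981 * X 0 ^ 5 * X 1 ^ 5 + 2134 * X 0 ^ 6 * X 1 ^ 4
        - 1153 * X 0 ^ 7 * X 1 ^ 3 - 981 * X 0 ^ 8 * X 1 ^ 2 + 2134 * X 0 ^ 9 * X 1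
        - 1153 * X 0 ^ 10,
      by simp only [fQ, map_sub, map_mul, map_add, map_pow, map_neg, map_ofNat, aeval_X,
        Matrix.cons_val_one, Matrix.cons_val_zero, Matrix.head_cons, Matrix.cons_val_two,
        Matrix.tail_cons, Matrix.cons_val_three]; ring⟩

lemma IQ_vanish : ∀ a ∈ IQ, φ a = 0 := by
  have h : IQ ≤ RingHom.ker (φ : PQ →+* RFl) := by
    rw [IQ, Ideal.span_le]
    intro g hg
    exact gens_vanish g hg
  exact fun a ha => h ha

/-- The section showing surjectivity. -/
def σFl : MvPolynomial (Fin 2) ℚ →ₐ[ℚ] PQ :=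
  aeval ![C (-1/3 : ℚ) * X 1, X 0]

lemma aeval_fQ_comp_σ : (aeval fQ).comp σFl = AlgHom.id ℚ (MvPolynomial (Fin 2) ℚ) := by
  apply MvPolynomial.algHom_ext
  intro i
  fin_cases i <;>
    simp only [AlgHom.comp_apply, AlgHom.id_apply, σFl, aeval_X, Fin.zero_eta, Fin.mk_one,
      Matrix.cons_val_zero, Matrix.cons_val_one, Matrix.head_cons, map_mul, aeval_C, fQ,
      Fin.isValue]
  rw [MvPolynomial.algebraMap_eq,
    show (-3 * X 0 : MvPolynomial (Fin 2) ℚ) = C (-3 : ℚ) * X 0 by rw [map_neg, map_ofNat],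
    ← mul_assoc, ← C_mul]
  norm_num

lemma φ_comp_σ (q : MvPolynomial (Fin 2) ℚ) : φ (σFl q) = Ideal.Quotient.mk JFl q := by
  rw [φ_apply, show aeval fQ (σFl q) = ((aeval fQ).comp σFl) q from rfl, aeval_fQ_comp_σ]
  rfl

/-- φ kills each generator of I_Q, hence descends to a homomorphism
i* : R_Q → R_Fl, and this induced homomorphism is surjective. -/
theorem restriction_to_flag_exists_surjective :
    (∀ g ∈ gensQ, φ g = 0) ∧
    ∃ ψ : RQ →ₐ[ℚ] RFl,
      (∀ p : PQ, ψ (Ideal.Quotient.mk IQ p) = φ p) ∧ Function.Surjective ψ := by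
  refine ⟨gens_vanish, Ideal.Quotient.liftₐ IQ φ IQ_vanish, fun p => rfl, ?_⟩
  intro y
  obtain ⟨q, rfl⟩ := Ideal.Quotient.mk_surjective y
  refine ⟨Ideal.Quotient.mk IQ (σFl q), ?_⟩
  show φ (σFl q) = _
  rw [φ_comp_σ]
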